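/- For every even Schwartz function φ: ℝ → ℂ and every integer j ≥ 0, ∫_0^∞ ϱ^j (d/dϱ)^j φ̂(ϱ) dϱ = (−1)^j · π · j! · φ(0). -/

import Mathlib

open MeasureTheory Filter
open scoped ENNReal NNReal RealInnerProductSpace BigOperators Topology

noncomputable section

/-- `ℝ^d` as a Euclidean space. -/
abbrev Euc (d : ℕ) : Type := EuclideanSpace ℝ (Fin d)

/-- The geometric setup: `Ω` is a bounded open convex subset of `ℝ^d` containing the origin,
`ρ` is its Minkowski functional, which is assumed to be smooth away from the origin and
positive away from the origin. -/
structure IsMinkowskiGauge (d : ℕ) (Ω : Set (Euc d)) (ρ : Euc d → ℝ) : Prop where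
  isOpen : IsOpen Ω
  convex : Convex ℝ Ω
  isBounded : Bornology.IsBounded Ω
  zero_mem : (0 : Euc d) ∈ Ω
  eq_gauge : ρ = gauge Ω
  smooth : ContDiffOn ℝ (⊤ : ℕ∞) ρ {(0 : Euc d)}ᶜ
  pos : ∀ ξ : Euc d, ξ ≠ 0 → 0 < ρ ξ

/-- Everywhere nonvanishing Gaussian curvature of `∂Ω = {ρ = 1}`: for every `ξ ≠ 0`
the Hessian of `ρ` at `ξ` has rank `d - 1`. -/
def HasNonvanishingCurvature (d : ℕ) (ρ : Euc d → ℝ) : Prop :=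
  ∀ ξ : Euc d, ξ ≠ 0 →
    LinearMap.rank ((fderiv ℝ (fderiv ℝ ρ) ξ : Euc d →L[ℝ] (Euc d →L[ℝ] ℝ)) :
      Euc d →ₗ[ℝ] (Euc d →L[ℝ] ℝ)) = (d - 1 : ℕ)

/-- The Fourier transform `f̂(ξ) = ∫ f(y) e^{−i⟨y,ξ⟩} dy` on `ℝ^d`. -/
def FTd {d : ℕ} (f : Euc d → ℂ) (ξ : Euc d) : ℂ :=
  ∫ y : Euc d, f y * Complex.exp (-(Complex.I * (⟪y, ξ⟫ : ℂ)))

/-- The Riesz mean `R^λ_{a,t} f(x) = (2π)^{-d} ∫ (1 - ρ(ξ)^a/t^a)_+^λ f̂(ξ) e^{i⟨x,ξ⟩} dξ`. -/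
def RieszMean {d : ℕ} (ρ : Euc d → ℝ) (a lam t : ℝ) (f : Euc d → ℂ) (x : Euc d) : ℂ :=
  (((2 * Real.pi) ^ d)⁻¹ : ℝ) •
    ∫ ξ : Euc d, ((max (1 - ρ ξ ^ a / t ^ a) 0) ^ lam : ℝ) •
      (FTd f ξ * Complex.exp (Complex.I * (⟪x, ξ⟫ : ℂ)))

/-- The critical index `λ(p) = d(1/p - 1/2) - 1/2`. -/
def criticalIndex (d : ℕ) (p : ℝ) : ℝ := (d : ℝ) * (1 / p - 1 / 2) - 1 / 2

/-- One-dimensional Fourier transform `φ̂(ϱ) = ∫ φ(s) e^{-isϱ} ds`. -/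
def FT1 (φ : ℝ → ℂ) (ϱ : ℝ) : ℂ :=
  ∫ s : ℝ, φ s * Complex.exp (-(Complex.I * (s : ℂ) * (ϱ : ℂ)))

/-- One-dimensional Fourier transform of a real-valued function. -/
def FT1R (Φ : ℝ → ℝ) : ℝ → ℂ := FT1 (fun s => (Φ s : ℂ))

/-- The pieces `h_{λ,ℓ}` of the decomposition of the Riesz multiplier. -/
def hfun (χ Φ Ψ : ℝ → ℝ) (lam : ℝ) : ℕ → ℝ → ℂ
  | 0 => fun ϱ => ((2 * Real.pi)⁻¹ * χ ϱ : ℝ) •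
      ∫ u : ℝ, ((max (1 - u) 0) ^ lam : ℝ) • FT1R Φ (ϱ - u)
  | (ℓ + 1) => fun ϱ => ((2 * Real.pi)⁻¹ * χ ϱ : ℝ) •
      ∫ u : ℝ, ((max (1 - u) 0) ^ lam : ℝ) •
        (((2 : ℝ) ^ ℓ) • FT1R Ψ ((2 : ℝ) ^ ℓ * (ϱ - u)))

/-- The data entering the construction of `h_{λ,ℓ}`: a cutoff `χ ∈ C_c^∞((1/2,2))`, an even
`Φ = Φ∘ ∈ C_c^∞(ℝ)` with `Φ∘ = 1` on `[-1/2,1/2]`, `supp Φ∘ ⊆ [-1,1]`, satisfying the moment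
cancellation conditions, and `Ψ(x) = Φ∘(x/2) - Φ∘(x)`. -/
structure HData (lam : ℝ) (N0 : ℕ) (χ Φ Ψ : ℝ → ℝ) : Prop where
  hχsm : ContDiff ℝ (⊤ : ℕ∞) χ
  hχsupp : Function.support χ ⊆ Set.Ioo (1/2 : ℝ) 2
  hΦsm : ContDiff ℝ (⊤ : ℕ∞) Φ
  hΦeven : ∀ s, Φ (-s) = Φ s
  hΦone : ∀ s : ℝ, |s| ≤ 1/2 → Φ s = 1
  hΦzero : ∀ s : ℝ, 1 ≤ |s| → Φ s = 0
  hΦcanc : ∀ j : ℕ, j ≤ N0 → (j : ℝ) ≠ lam →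
    (∫ ϱ in Set.Ioi (0 : ℝ), ((ϱ ^ lam : ℝ) : ℂ) * iteratedDeriv j (FT1R Φ) ϱ) = 0
  hΨ : Ψ = fun x => Φ (x / 2) - Φ x

/-- Inverse Fourier transform on `ℝ^d`. -/
def invFTd {d : ℕ} (m : Euc d → ℂ) (x : Euc d) : ℂ :=
  (((2 * Real.pi) ^ d)⁻¹ : ℝ) •
    ∫ ξ : Euc d, m ξ * Complex.exp (Complex.I * (⟪x, ξ⟫ : ℂ))

/-- The Fourier multiplier operator `m(D) f = (𝓕⁻¹ m) * f`. -/
def mulOp {d : ℕ} (m : Euc d → ℂ) (f : Euc d → ℂ) (x : Euc d) : ℂ :=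
  ∫ y : Euc d, invFTd m (x - y) * f y

/-- The Hardy–Littlewood maximal function. -/
def HLMaximal {d : ℕ} (w : Euc d → ℝ) (x : Euc d) : ℝ≥0∞ :=
  ⨆ r : {r : ℝ // 0 < r},
    (volume (Metric.ball x r.1))⁻¹ * ∫⁻ y in Metric.ball x r.1, ENNReal.ofReal (w y)

/-- `w` is an `A₁` weight. -/
structure IsA1Weight {d : ℕ} (w : Euc d → ℝ) : Prop where
  nonneg : ∀ x, 0 ≤ w x
  locInt : LocallyIntegrable w volume
  ne_zero : ¬ (w =ᵐ[(volume : Measure (Euc d))] (0 : Euc d → ℝ))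
  maximal_le : ∃ C : ℝ, ∀ᵐ x ∂(volume : Measure (Euc d)),
    HLMaximal w x ≤ ENNReal.ofReal (C * w x)

/-- `w` satisfies a reverse Hölder inequality with exponent `σ`. -/
def IsRH {d : ℕ} (σ : ℝ) (w : Euc d → ℝ) : Prop :=
  ∃ C : ℝ, ∀ (x : Euc d) (r : ℝ), 0 < r →
    ((volume (Metric.ball x r))⁻¹ *
        ∫⁻ y in Metric.ball x r, ENNReal.ofReal (w y) ^ σ) ^ (1 / σ) ≤
      ENNReal.ofReal C *
        ((volume (Metric.ball x r))⁻¹ * ∫⁻ y in Metric.ball x r, ENNReal.ofReal (w y))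

/-- The weighted `L^p(w)` (quasi-)norm. -/
def wLpNorm {d : ℕ} (p : ℝ) (w : Euc d → ℝ) (g : Euc d → ℂ) : ℝ≥0∞ :=
  (∫⁻ x, (‖g x‖₊ : ℝ≥0∞) ^ p * ENNReal.ofReal (w x)) ^ (1 / p)

/-- The weighted weak `L^{p,∞}(w)` (quasi-)norm. -/
def wWeakNorm {d : ℕ} (p : ℝ) (w : Euc d → ℝ) (g : Euc d → ℂ) : ℝ≥0∞ :=
  ⨆ α : {α : ℝ // 0 < α},
    ENNReal.ofReal α.1 *
      (∫⁻ x in {x : Euc d | α.1 < ‖g x‖}, ENNReal.ofReal (w x)) ^ (1 / p)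

/-- A (half-open, axes-parallel) cube `x + [0,s)^d` in `ℝ^d`. -/
def IsCube {d : ℕ} (Q : Set (Euc d)) : Prop :=
  ∃ (x : Euc d) (s : ℝ), 0 < s ∧ Q = {y : Euc d | ∀ i, y i ∈ Set.Ico (x i) (x i + s)}

/-- The average `⟨f⟩_{Q,p} = (|Q|⁻¹ ∫_Q |f|^p)^{1/p}`. -/
def cubeAvg {d : ℕ} (p : ℝ) (Q : Set (Euc d)) (f : Euc d → ℂ) : ℝ≥0∞ :=
  ((volume Q)⁻¹ * ∫⁻ x in Q, (‖f x‖₊ : ℝ≥0∞) ^ p) ^ (1 / p)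

/-- A `γ`-sparse (finite) family of cubes. -/
def IsSparseFamily {d : ℕ} (γ : ℝ) (𝔖 : Finset (Set (Euc d))) : Prop :=
  (∀ Q ∈ 𝔖, IsCube Q) ∧
  ∃ E : Set (Euc d) → Set (Euc d),
    (∀ Q ∈ 𝔖, MeasurableSet (E Q) ∧ E Q ⊆ Q ∧
      ENNReal.ofReal γ * volume Q ≤ volume (E Q)) ∧
    (𝔖 : Set (Set (Euc d))).Pairwise fun Q Q' => Disjoint (E Q) (E Q')

/-- The maximal sparse form `Λ*_{p,q}(f₁,f₂)` (supremum over `1/2`-sparse families). -/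
def sparseFormMax {d : ℕ} (p q : ℝ) (f₁ f₂ : Euc d → ℂ) : ℝ≥0∞ :=
  ⨆ 𝔖 : {𝔖 : Finset (Set (Euc d)) // IsSparseFamily (1/2) 𝔖},
    ∑ Q ∈ 𝔖.1, volume Q * cubeAvg p Q f₁ * cubeAvg q Q f₂

/-- The sparse bound `T ∈ Sp(p,q)`. -/
def SparseBound {d : ℕ} (p q : ℝ) (T : (Euc d → ℂ) → Euc d → ℂ) : Prop :=
  ∃ C : ℝ, ∀ f₁ f₂ : Euc d → ℂ,
    ContDiff ℝ (⊤ : ℕ∞) f₁ → HasCompactSupport f₁ →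
    ContDiff ℝ (⊤ : ℕ∞) f₂ → HasCompactSupport f₂ →
    ENNReal.ofReal ‖∫ x, T f₁ x * f₂ x‖ ≤ ENNReal.ofReal C * sparseFormMax p q f₁ f₂

/-- The exponent `r_*(p, p∘, r∘)`. -/
def rStar (d : ℕ) (p p0 r0 : ℝ) : ℝ :=
  if p ≤ 2 * ((d : ℝ) + 1) / ((d : ℝ) + 3) then
    (((d : ℝ) + 1) / ((d : ℝ) - 1) * (1 - 1 / p))⁻¹
  else
    ((1 / r0 * (((d : ℝ) + 3) / (2 * ((d : ℝ) + 1)) - 1 / p) +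
        1 / 2 * (1 / p - 1 / p0)) /
      (((d : ℝ) + 3) / (2 * ((d : ℝ) + 1)) - 1 / p0))⁻¹

/-- The exponent `q_*(p, p∘, r∘)`, the conjugate of `r_*(p, p∘, r∘)`. -/
def qStar (d : ℕ) (p p0 r0 : ℝ) : ℝ := (1 - 1 / rStar d p p0 r0)⁻¹

/-- The trapezoid `∏_d(λ)` with corners `P₁, P₂, P₃, P₄`. -/
def trapez (d : ℕ) (lam : ℝ) : Set (ℝ × ℝ) :=
  convexHull ℝ
    {((2*lam + (d:ℝ) + 1)/(2*(d:ℝ)), ((d:ℝ) - 2*lam - 1)/(2*(d:ℝ))),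
     ((2*lam + (d:ℝ) + 1)/(2*(d:ℝ)),
       ((d:ℝ) - 1)/(2*(d:ℝ)) + lam*((d:ℝ) + 1)/((d:ℝ)*((d:ℝ) - 1))),
     (((d:ℝ) - 1)/(2*(d:ℝ)) + lam*((d:ℝ) + 1)/((d:ℝ)*((d:ℝ) - 1)),
       (2*lam + (d:ℝ) + 1)/(2*(d:ℝ))),
     (((d:ℝ) - 2*lam - 1)/(2*(d:ℝ)), (2*lam + (d:ℝ) + 1)/(2*(d:ℝ)))}

/-- A dyadic cube `2^k(m + [0,1)^d)`, recorded by its generation `k` and position `m`. -/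
structure DyadicCube (d : ℕ) where
  k : ℤ
  m : Fin d → ℤ
deriving DecidableEq

/-- The subset of `ℝ^d` corresponding to a dyadic cube. -/
def DyadicCube.set {d : ℕ} (Q : DyadicCube d) : Set (Euc d) :=
  {x : Euc d | ∀ i, x i ∈ Set.Ico ((2:ℝ) ^ Q.k * (Q.m i : ℝ)) ((2:ℝ) ^ Q.k * ((Q.m i : ℝ) + 1))}

/-- `μ(𝔔) = Σ_{Q ∈ 𝔔} |Q|`. -/
def dyadicMeasure {d : ℕ} (𝔔 : Finset (DyadicCube d)) : ℝ≥0∞ :=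
  ∑ Q ∈ 𝔔, volume Q.set

/-- The class `𝒴_M` of normalized bump functions. -/
def MemYM (M : ℕ) (χ : ℝ → ℂ) : Prop :=
  ContDiff ℝ (M : ℕ∞) χ ∧ Function.support χ ⊆ Set.Ioo (1/2 : ℝ) 2 ∧
    ∑ ν ∈ Finset.range (M + 1), (⨆ s : ℝ, ‖iteratedDeriv ν χ s‖) ≤ 1

/-- The function `Σ_{j ≥ 1} 2^{j(d+1)/2} m_j(D)[Σ_{Q ∈ 𝔇_j} f_Q]` appearing in `VBR(p,r)`,
where `m_j(ξ) = χ_j(2^j(1 - ρ(ξ)))`. -/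
def vbrSum {d : ℕ} (ρ : Euc d → ℝ) (χ : ℕ → ℝ → ℂ) (𝔉 : Finset (DyadicCube d))
    (f : DyadicCube d → Euc d → ℂ) (x : Euc d) : ℂ :=
  Finset.sum ((𝔉.image (fun Q => Q.k)).filter (fun j => 1 ≤ j)) fun (j : ℤ) =>
    ((2:ℝ) ^ ((j : ℝ) * ((d : ℝ) + 1) / 2)) •
      mulOp (fun ξ => χ j.toNat ((2:ℝ) ^ j * (1 - ρ ξ)))
        (fun y => ∑ Q ∈ 𝔉.filter (fun Q' => Q'.k = j), f Q y) x

/-- The statement `VBR(p,r)`. -/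
def VBR (d : ℕ) (ρ : Euc d → ℝ) (p r : ℝ) : Prop :=
  ∃ (M : ℕ) (C : ℝ), 1 ≤ M ∧
    ∀ χ : ℕ → ℝ → ℂ, (∀ j : ℕ, 1 ≤ j → MemYM M (χ j)) →
    ∀ (𝔉 : Finset (DyadicCube d)) (f : DyadicCube d → Euc d → ℂ),
      (∀ Q ∈ 𝔉, Function.support (f Q) ⊆ closure Q.set) →
      eLpNorm (vbrSum ρ χ 𝔉 f) (ENNReal.ofReal r) volume ≤
        ENNReal.ofReal C *
          (∑ Q ∈ 𝔉, volume Q.set * eLpNorm (f Q) (ENNReal.ofReal p) volume ^ r) ^ (1 / r)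

/-- `Hyp(p∘, r∘)`: `VBR(p,r)` holds for all `p ∈ [2(d+1)/(d+3), p∘)`
and all `r ∈ [p, r_*(p,p∘,r∘))`. -/
def Hyp (d : ℕ) (ρ : Euc d → ℝ) (p0 r0 : ℝ) : Prop :=
  ∀ p r : ℝ, 2 * ((d : ℝ) + 1) / ((d : ℝ) + 3) ≤ p → p < p0 →
    p ≤ r → r < rStar d p p0 r0 → VBR d ρ p r

/-- The operator `A_{λ,ℓ} = 2^{ℓ(λ + (d+1)/2)} h_{λ,ℓ}(ρ(D))`. -/
def Aop {d : ℕ} (ρ : Euc d → ℝ) (h : ℕ → ℝ → ℂ) (lam : ℝ) (ℓ : ℕ)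
    (f : Euc d → ℂ) (x : Euc d) : ℂ :=
  ((2:ℝ) ^ ((ℓ : ℝ) * (lam + ((d : ℝ) + 1) / 2))) • mulOp (fun ξ => h ℓ (ρ ξ)) f x

/-- `𝒜_{s,𝔔} F = Σ_{ℓ ≥ s} Σ_{Q ∈ 𝔔_{ℓ-s}} A_{λ,ℓ}[F_Q 1_Q]`. -/
def AopSum {d : ℕ} (ρ : Euc d → ℝ) (h : ℕ → ℝ → ℂ) (lam : ℝ) (s : ℕ)
    (𝔔 : Finset (DyadicCube d)) (F : DyadicCube d → Euc d → ℂ) (x : Euc d) : ℂ :=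
  ∑ Q ∈ 𝔔, Aop ρ h lam (Q.k.toNat + s) (Q.set.indicator (F Q)) x

/-- `Ξ_{s,𝔔}[F,β] = Σ_{ℓ ≥ s} Σ_{Q ∈ 𝔔_{ℓ-s}} β(Q) A_{λ,ℓ}[F_Q 1_Q]`. -/
def XiSum {d : ℕ} (ρ : Euc d → ℝ) (h : ℕ → ℝ → ℂ) (lam : ℝ) (s : ℕ)
    (𝔔 : Finset (DyadicCube d)) (F : DyadicCube d → Euc d → ℂ)
    (β : DyadicCube d → ℂ) (x : Euc d) : ℂ :=
  ∑ Q ∈ 𝔔, β Q * Aop ρ h lam (Q.k.toNat + s) (Q.set.indicator (F Q)) x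

/-- `‖F‖_{ℓ^∞(L^p)} = sup_{Q ∈ 𝔔} ‖F_Q‖_{L^p}`. -/
def supLp {d : ℕ} (p : ℝ) (𝔔 : Finset (DyadicCube d))
    (F : DyadicCube d → Euc d → ℂ) : ℝ≥0∞ :=
  ⨆ Q ∈ 𝔔, eLpNorm (F Q) (ENNReal.ofReal p) volume

/-- `‖β‖_{ℓ^{r,1}(μ)} = ∫_0^∞ μ({Q ∈ 𝔔 : |β(Q)| > α})^{1/r} dα`. -/
def lorentzNorm {d : ℕ} (r : ℝ) (𝔔 : Finset (DyadicCube d))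
    (β : DyadicCube d → ℂ) : ℝ≥0∞ :=
  ∫⁻ α in Set.Ioi (0:ℝ),
    (∑ Q ∈ 𝔔, if α < ‖β Q‖ then volume Q.set else 0) ^ (1 / r)

/-! Integrating by parts `j` times on `(0, ∞)` turns the integral into `(-1)^j j! ∫_0^∞ φ̂`;
the boundary terms vanish at `0` because of the factor `ϱ^(k+1)` and at `∞` by Schwartz decay.
Since `φ̂` is even, `∫_0^∞ φ̂` is half of `∫_ℝ φ̂ = 2π φ(0)`, by Fourier inversion at `0`. -/

open Set
open scoped FourierTransform SchwartzMap

namespace SchwartzMap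

variable {E : Type*} [NormedAddCommGroup E] [NormedSpace ℝ E]

theorem coe_smulLeftCLM_pow (ψ : 𝓢(ℝ, E)) (k : ℕ) :
    ⇑(smulLeftCLM E (· ^ k : ℝ → ℝ) ψ) = fun x ↦ x ^ k • ψ x :=
  smulLeftCLM_apply (Function.HasTemperateGrowth.id'.pow k) ψ

theorem integrable_pow_smul (ψ : 𝓢(ℝ, E)) (k : ℕ) : Integrable fun x : ℝ ↦ x ^ k • ψ x := by
  simpa only [coe_smulLeftCLM_pow] using
    (smulLeftCLM E (· ^ k : ℝ → ℝ) ψ).integrable (μ := volume)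

theorem tendsto_pow_smul_atTop (ψ : 𝓢(ℝ, E)) (k : ℕ) :
    Tendsto (fun x : ℝ ↦ x ^ k • ψ x) atTop (𝓝 0) := by
  simpa only [coe_smulLeftCLM_pow] using
    (smulLeftCLM E (· ^ k : ℝ → ℝ) ψ).tendsto_cocompact.mono_left atTop_le_cocompact

theorem coe_iterate_derivCLM (ψ : 𝓢(ℝ, E)) (j : ℕ) :
    ⇑((derivCLM ℝ E)^[j] ψ) = iteratedDeriv j ψ := by
  induction j with
  | zero => rfl
  | succ j ih =>
    ext x
    rw [Function.iterate_succ_apply', derivCLM_apply, ih, iteratedDeriv_succ]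

variable [CompleteSpace E]

theorem integral_Ioi_pow_succ_smul_deriv (ψ : 𝓢(ℝ, E)) (k : ℕ) :
    ∫ x in Ioi 0, x ^ (k + 1) • deriv ψ x = -((k + 1 : ℝ) • ∫ x in Ioi 0, x ^ k • ψ x) := by
  have hderiv (x : ℝ) : HasDerivAt (fun x ↦ x ^ (k + 1) • ψ x)
      ((k + 1 : ℝ) • x ^ k • ψ x + x ^ (k + 1) • deriv ψ x) x := by
    refine ((hasDerivAt_pow (k + 1) x).smul (ψ.hasDerivAt x)).congr_deriv ?_
    push_cast
    rw [mul_smul, add_comm]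
  have hint₁ : Integrable fun x : ℝ ↦ (k + 1 : ℝ) • x ^ k • ψ x :=
    (ψ.integrable_pow_smul k).smul _
  have hint₂ : Integrable fun x : ℝ ↦ x ^ (k + 1) • deriv ψ x :=
    (derivCLM ℝ E ψ).integrable_pow_smul (k + 1)
  have hftc := integral_Ioi_of_hasDerivAt_of_tendsto' (a := 0) (fun x _ ↦ hderiv x)
    (hint₁.add hint₂).integrableOn (ψ.tendsto_pow_smul_atTop (k + 1))
  rw [integral_add hint₁.integrableOn hint₂.integrableOn, integral_smul, zero_pow k.succ_ne_zero,
    zero_smul, sub_self] at hftc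
  exact eq_neg_of_add_eq_zero_right hftc

theorem integral_Ioi_pow_smul_iteratedDeriv (ψ : 𝓢(ℝ, E)) (j : ℕ) :
    ∫ x in Ioi 0, x ^ j • iteratedDeriv j ψ x =
      ((-1) ^ j * j.factorial : ℝ) • ∫ x in Ioi 0, ψ x := by
  induction j with
  | zero => simp
  | succ j ih =>
    rw [iteratedDeriv_succ, ← coe_iterate_derivCLM, integral_Ioi_pow_succ_smul_deriv,
      coe_iterate_derivCLM, ih, smul_smul, ← neg_smul, Nat.factorial_succ]
    push_cast
    ring_nf

end SchwartzMap

theorem integral_Ioi_eq_half_integral_of_even {E : Type*} [NormedAddCommGroup E] [NormedSpace ℝ E]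
    {f : ℝ → E} (heven : Function.Even f) (hf : Integrable f) :
    ∫ x in Ioi 0, f x = (2 : ℝ)⁻¹ • ∫ x, f x := by
  have hIic : ∫ x in Iic 0, f x = ∫ x in Ioi 0, f x := by
    rw [← neg_zero, ← integral_comp_neg_Ioi, neg_zero]
    exact setIntegral_congr_fun measurableSet_Ioi fun x _ ↦ heven x
  rw [← integral_add_compl measurableSet_Iic hf, compl_Iic, hIic, ← two_smul ℝ, smul_smul,
    inv_mul_cancel₀ two_ne_zero, one_smul]

theorem FT1_eq_fourier (φ : ℝ → ℂ) (ϱ : ℝ) : FT1 φ ϱ = 𝓕 φ ((2 * Real.pi)⁻¹ * ϱ) := by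
  rw [Real.fourier_eq']
  refine integral_congr_ae (Eventually.of_forall fun s ↦ ?_)
  simp only [RCLike.inner_apply, conj_trivial, smul_eq_mul]
  rw [mul_comm]
  congr 2
  push_cast
  field_simp

theorem FT1_even {φ : ℝ → ℂ} (hφ : Function.Even φ) : Function.Even (FT1 φ) := by
  intro ϱ
  rw [FT1, ← integral_neg_eq_self]
  congr 1 with s
  rw [hφ]
  push_cast
  ring_nf

theorem integral_FT1 {φ : ℝ → ℂ} (hφ : Continuous φ) (hint : Integrable φ)
    (hint' : Integrable (𝓕 φ)) : ∫ ϱ, FT1 φ ϱ = 2 * Real.pi * φ 0 := by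
  have hinv : ∫ ξ, 𝓕 φ ξ = φ 0 := by
    simpa [Real.fourierInv_eq] using congrFun (hφ.fourierInv_fourier_eq hint hint') 0
  simp_rw [FT1_eq_fourier]
  rw [Measure.integral_comp_inv_mul_left, hinv, abs_of_pos Real.two_pi_pos, Complex.real_smul]
  push_cast
  ring

theorem exists_schwartzMap_coe_eq_FT1 (φ : 𝓢(ℝ, ℂ)) : ∃ ψ : 𝓢(ℝ, ℂ), ⇑ψ = FT1 φ := by
  let scale : ℝ ≃L[ℝ] ℝ :=
    (LinearEquiv.smulOfNeZero ℝ ℝ (2 * Real.pi)⁻¹ (by positivity)).toContinuousLinearEquiv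
  refine ⟨SchwartzMap.compCLMOfContinuousLinearEquiv ℝ scale (𝓕 φ), funext fun ϱ ↦ ?_⟩
  rw [FT1_eq_fourier]
  rfl

/-- For an even Schwartz function `φ`,
`∫_0^∞ ϱ^j (d/dϱ)^j φ̂(ϱ) dϱ = (-1)^j π j! φ(0)`. -/
theorem integral_rpow_iteratedDeriv_fourier_even
    (φ : SchwartzMap ℝ ℂ) (hφ : ∀ s : ℝ, φ (-s) = φ s) (j : ℕ) :
    (∫ ϱ in Set.Ioi (0:ℝ), (ϱ : ℂ) ^ j * iteratedDeriv j (FT1 ⇑φ) ϱ) =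
      (-1 : ℂ) ^ j * (Real.pi : ℂ) * (Nat.factorial j : ℂ) * φ 0 := by
  obtain ⟨ψ, hψ⟩ := exists_schwartzMap_coe_eq_FT1 φ
  have hψeven : Function.Even ψ := hψ ▸ FT1_even hφ
  calc ∫ ϱ in Ioi (0 : ℝ), (ϱ : ℂ) ^ j * iteratedDeriv j (FT1 φ) ϱ
      = ∫ ϱ in Ioi 0, ϱ ^ j • iteratedDeriv j ψ ϱ := by
        simp_rw [hψ, Complex.real_smul, Complex.ofReal_pow]
    _ = ((-1) ^ j * j.factorial : ℝ) • (2 : ℝ)⁻¹ • ∫ ϱ, FT1 φ ϱ := by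
        rw [ψ.integral_Ioi_pow_smul_iteratedDeriv,
          integral_Ioi_eq_half_integral_of_even hψeven ψ.integrable, hψ]
    _ = _ := by
        rw [integral_FT1 φ.continuous φ.integrable (𝓕 φ).integrable]
        simp only [Complex.real_smul]
        push_cast
        field_simp
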